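/- arXiv:0804.2052 — 5 statements merged into one kernel-verified Lean document; each statement's English description precedes it below -/
import Mathlib

section
/- The Leibniz boundary map d on the tensor algebra of a Leibniz algebra g, defined by d(g_1 ⊗ ⋯ ⊗ g_n) = Σ_{1≤i<j≤n} (-1)^j g_1 ⊗ ⋯ ⊗ g_{i-1} ⊗ [g_i,g_j] ⊗ g_{i+1} ⊗ ⋯ ⊗ ĝ_j ⊗ ⋯ ⊗ g_n, satisfies d ∘ d = 0. -/
/-!
Write a tensor of degree `n + 2` as `t ⊗ y`. Then `d (t ⊗ y) = d t ⊗ y + (-1)ⁿ t·y`, where `t·y`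
extends the right multiplication `R_y = [-, y]` to tensor powers as a derivation. The Leibniz
identity, read as `⁅R_y, R_w⁆ = R_[w,y]`, makes `d` commute with `t ↦ t·y`, so in
`d (d (t ⊗ y)) = d (d t) ⊗ y - (-1)ⁿ (d t)·y + (-1)ⁿ (d t)·y` the last two terms cancel and the
first vanishes by induction.
-/

open scoped TensorProduct
open PiTensorProduct

theorem Fin.removeNth_castSucc_snoc {α : Type*} {n : ℕ} (j : Fin (n + 1)) (x : Fin (n + 1) → α)
    (y : α) :
    j.castSucc.removeNth (Fin.snoc x y : Fin (n + 2) → α) = Fin.snoc (j.removeNth x) y := by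
  funext i
  induction i using Fin.lastCases with
  | last => simp [Fin.removeNth]
  | cast i => simp [Fin.removeNth]

namespace LeibnizComplex

variable {R L : Type*} [CommRing R] [AddCommGroup L] [Module R L]

def tensorSnoc (n : ℕ) : L →ₗ[R] (⨂[R]^n L) →ₗ[R] ⨂[R]^(n + 1) L :=
  (lift (tprod R : MultilinearMap R (fun _ : Fin (n + 1) => L) _).curryRight).flip

@[simp]
theorem tensorSnoc_tprod (y : L) {n : ℕ} (x : Fin n → L) :
    tensorSnoc n y (tprod R x) = tprod R (Fin.snoc x y : Fin (n + 1) → L) := by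
  simp [tensorSnoc]

theorem ext_tensorSnoc {M : Type*} [AddCommGroup M] [Module R M] {n : ℕ}
    {f g : (⨂[R]^(n + 1) L) →ₗ[R] M}
    (h : ∀ y t, f (tensorSnoc n y t) = g (tensorSnoc n y t)) : f = g := by
  refine PiTensorProduct.ext (MultilinearMap.ext fun x => ?_)
  simpa [Fin.snoc_init_self] using h (x (Fin.last n)) (tprod R (Fin.init x))

def tensorDerivation (f : Module.End R L) (n : ℕ) : Module.End R (⨂[R]^n L) :=
  ∑ i, PiTensorProduct.map (Function.update (fun _ => LinearMap.id) i f)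

@[simp]
theorem tensorDerivation_tprod (f : Module.End R L) {n : ℕ} (x : Fin n → L) :
    tensorDerivation f n (tprod R x) = ∑ i, tprod R (Function.update x i (f (x i))) := by
  simp only [tensorDerivation, LinearMap.sum_apply, map_tprod]
  refine Finset.sum_congr rfl fun i _ => congrArg _ (funext fun k => ?_)
  rcases eq_or_ne k i with rfl | hki <;> simp [*]

theorem tensorDerivation_tensorSnoc (f : Module.End R L) (w : L) {n : ℕ} (t : ⨂[R]^n L) :
    tensorDerivation f (n + 1) (tensorSnoc n w t) =
      tensorSnoc n w (tensorDerivation f n t) + tensorSnoc n (f w) t := by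
  induction t using PiTensorProduct.induction_on with
  | smul_tprod r x =>
    simp [Fin.sum_univ_castSucc, Fin.snoc_update, Fin.update_snoc_last, Finset.smul_sum]
  | add s t hs ht => simp only [map_add, hs, ht]; abel

theorem tensorDerivation_lie (f g : Module.End R L) (n : ℕ) :
    tensorDerivation ⁅f, g⁆ n = ⁅tensorDerivation f n, tensorDerivation g n⁆ := by
  simp only [LieRing.of_associative_ring_bracket]
  induction n with
  | zero => simp [tensorDerivation]
  | succ n ih =>
    refine ext_tensorSnoc fun w t => ?_
    simp only [ih, Module.End.mul_apply, LinearMap.sub_apply, tensorDerivation_tensorSnoc, map_add,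
      map_sub]
    abel

theorem lie_flip_eq_flip_of_leibniz (b : L →ₗ[R] L →ₗ[R] L)
    (hleib : ∀ x y z : L, b (b x y) z = b (b x z) y + b x (b y z)) (y w : L) :
    ⁅b.flip y, b.flip w⁆ = b.flip (b w y) := by
  ext x
  simp [LieRing.of_associative_ring_bracket, hleib x w y]

/-- Indices are 0-based, so the sign `(-1)^j` of the paper is `(-1)^(j+1)` here. -/
def IsLeibnizBoundary (b : L →ₗ[R] L →ₗ[R] L) (d : ∀ n : ℕ, (⨂[R]^(n + 1) L) →ₗ[R] ⨂[R]^n L) :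
    Prop :=
  ∀ (n : ℕ) (v : Fin (n + 1) → L),
    d n (tprod R v) = ∑ j : Fin (n + 1), ∑ i ∈ Finset.Iio j,
      ((-1 : R) ^ ((j : ℕ) + 1)) • tprod R (j.removeNth (Function.update v i (b (v i) (v j))))

namespace IsLeibnizBoundary

variable {b : L →ₗ[R] L →ₗ[R] L} {d : ∀ n : ℕ, (⨂[R]^(n + 1) L) →ₗ[R] ⨂[R]^n L}

theorem boundary_zero (hd : IsLeibnizBoundary b d) : d 0 = 0 :=
  PiTensorProduct.ext (MultilinearMap.ext fun v => by simp [hd 0 v, bot_eq_zero])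

theorem apply_tprod_snoc (hd : IsLeibnizBoundary b d) {n : ℕ} (x : Fin (n + 1) → L) (y : L) :
    d (n + 1) (tprod R (Fin.snoc x y : Fin (n + 2) → L)) =
      tensorSnoc n y (d n (tprod R x)) +
        (-1 : R) ^ n • tensorDerivation (b.flip y) (n + 1) (tprod R x) := by
  rw [hd (n + 1), Fin.sum_univ_castSucc, hd n, map_sum, tensorDerivation_tprod, Finset.smul_sum]
  congr 1
  · refine Finset.sum_congr rfl fun j _ => ?_
    rw [Fin.Iio_castSucc, Finset.sum_map, map_sum]
    refine Finset.sum_congr rfl fun i _ => ?_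
    simp [← Fin.snoc_update, Fin.removeNth_castSucc_snoc]
  · rw [Fin.Iio_last_eq_map, Finset.sum_map]
    refine Finset.sum_congr rfl fun i _ => ?_
    simp [pow_succ]

theorem apply_tensorSnoc (hd : IsLeibnizBoundary b d) (n : ℕ) (y : L) (t : ⨂[R]^(n + 1) L) :
    d (n + 1) (tensorSnoc (n + 1) y t) =
      tensorSnoc n y (d n t) + (-1 : R) ^ n • tensorDerivation (b.flip y) (n + 1) t := by
  induction t using PiTensorProduct.induction_on with
  | smul_tprod r x => simp [hd.apply_tprod_snoc, smul_comm r]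
  | add s t hs ht => simp only [map_add, hs, ht, smul_add]; abel

theorem apply_tensorDerivation (hd : IsLeibnizBoundary b d)
    (hleib : ∀ x y z : L, b (b x y) z = b (b x z) y + b x (b y z)) (n : ℕ) (y : L)
    (t : ⨂[R]^(n + 1) L) :
    d n (tensorDerivation (b.flip y) (n + 1) t) = tensorDerivation (b.flip y) n (d n t) := by
  induction n with
  | zero => simp [hd.boundary_zero]
  | succ n ih =>
    suffices d (n + 1) ∘ₗ tensorDerivation (b.flip y) (n + 2) =
        tensorDerivation (b.flip y) (n + 1) ∘ₗ d (n + 1) from LinearMap.congr_fun this t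
    refine ext_tensorSnoc fun w s => ?_
    have hlie := LinearMap.congr_fun (tensorDerivation_lie (b.flip y) (b.flip w) (n + 1)) s
    rw [lie_flip_eq_flip_of_leibniz b hleib, LieRing.of_associative_ring_bracket] at hlie
    simp only [LinearMap.comp_apply, tensorDerivation_tensorSnoc, map_add, map_smul,
      hd.apply_tensorSnoc, ih, hlie, LinearMap.flip_apply, LinearMap.sub_apply,
      Module.End.mul_apply]
    module

end IsLeibnizBoundary

end LeibnizComplex

open LeibnizComplex

theorem leibniz_differential_squared_zero_general
    {K L : Type*} [Field K] [AddCommGroup L] [Module K L]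
    (b : L →ₗ[K] L →ₗ[K] L)
    (hleib : ∀ x y z : L, b (b x y) z = b (b x z) y + b x (b y z))
    (d : ∀ n : ℕ, (⨂[K]^(n+1) L) →ₗ[K] (⨂[K]^n L))
    (hd : ∀ (n : ℕ) (v : Fin (n+1) → L),
      d n (tprod K v) = ∑ j : Fin (n+1), ∑ i ∈ Finset.Iio j,
        ((-1 : K) ^ ((j : ℕ) + 1)) •
          tprod K (j.removeNth (Function.update v i (b (v i) (v j))))) :
    ∀ n : ℕ, (d n) ∘ₗ (d (n+1)) = 0 := by
  have hd : IsLeibnizBoundary b d := hd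
  intro n
  induction n with
  | zero => rw [hd.boundary_zero, LinearMap.zero_comp]
  | succ n ih =>
    have ih' (t) : d n (d (n + 1) t) = 0 := LinearMap.congr_fun ih t
    refine ext_tensorSnoc fun y t => ?_
    simp only [LinearMap.comp_apply, hd.apply_tensorSnoc, map_add, map_smul,
      hd.apply_tensorDerivation hleib, ih', LinearMap.zero_apply, map_zero]
    module

/-- The Leibniz boundary map
`d(g_1 ⊗ ⋯ ⊗ g_n) = Σ_{i<j} (-1)^j g_1 ⊗ ⋯ ⊗ [g_i,g_j] ⊗ ⋯ ⊗ ĝ_j ⊗ ⋯ ⊗ g_n`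
on tensor powers of a Leibniz algebra squares to zero.
Here `d n : g^{⊗(n+1)} → g^{⊗n}` and indices are 0-based, so the sign is
`(-1)^(j+1)` for the 0-based index `j`. -/
theorem leibniz_differential_squared_zero
    {K L : Type*} [Field K] [CharZero K] [AddCommGroup L] [Module K L]
    (b : L →ₗ[K] L →ₗ[K] L)
    (hleib : ∀ x y z : L, b (b x y) z = b (b x z) y + b x (b y z))
    (d : ∀ n : ℕ, (⨂[K]^(n+1) L) →ₗ[K] (⨂[K]^n L))
    (hd : ∀ (n : ℕ) (v : Fin (n+1) → L),
      d n (tprod K v) = ∑ j : Fin (n+1), ∑ i ∈ Finset.Iio j,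
        ((-1 : K) ^ ((j : ℕ) + 1)) •
          tprod K (j.removeNth (Function.update v i (b (v i) (v j))))) :
    ∀ n : ℕ, (d n) ∘ₗ (d (n+1)) = 0 :=
  leibniz_differential_squared_zero_general b hleib d hd
end

section
/- The adjoint action of a Leibniz algebra g on its tensor powers, defined by [g_1 ⊗ ⋯ ⊗ g_n, g] := Σ_{i=1}^n g_1 ⊗ ⋯ ⊗ [g_i, g] ⊗ ⋯ ⊗ g_n, commutes with the Leibniz differential: d([α, g]) = [d(α), g] for all α ∈ g^{⊗n} and g ∈ g. -/
open scoped TensorProduct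
open PiTensorProduct Function

/-!
Both sides of `d ∘ [·, y] = [·, y] ∘ d`, evaluated on `v₀ ⊗ ⋯ ⊗ vₙ`, are sums over pairs `i < j`
of terms contracting `vᵢ` with `vⱼ`, with `[·, y]` applied before or after the contraction. For a
fixed pair, the terms where `[·, y]` hits a factor other than `vᵢ, vⱼ` match one to one; the two
remaining terms on the left are `⋯ ⊗ [[vᵢ, y], vⱼ] ⊗ ⋯` and `⋯ ⊗ [vᵢ, [vⱼ, y]] ⊗ ⋯`, whose sum is
the remaining term `⋯ ⊗ [[vᵢ, vⱼ], y] ⊗ ⋯` on the right by the Leibniz identity.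
-/

section Contraction

variable {L : Type*} (b : L → L → L) {n : ℕ}

def rightBracketAt (y : L) (v : Fin n → L) (k : Fin n) : Fin n → L :=
  update v k (b (v k) y)

def contractAt (v : Fin (n + 1) → L) (i j : Fin (n + 1)) : Fin n → L :=
  j.removeNth (update v i (b (v i) (v j)))

variable {b}

lemma contractAt_succAbove (v : Fin (n + 1) → L) (j : Fin (n + 1)) (i : Fin n) :
    contractAt b v (j.succAbove i) j = update (j.removeNth v) i (b (v (j.succAbove i)) (v j)) :=
  Fin.removeNth_update_succAbove _ _ _ _

lemma contractAt_rightBracketAt_succAbove (y : L) (v : Fin (n + 1) → L) {i j : Fin (n + 1)}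
    {m : Fin n} (hm : j.succAbove m ≠ i) :
    contractAt b (rightBracketAt b y v (j.succAbove m)) i j =
      rightBracketAt b y (contractAt b v i j) m := by
  have hmj : j.succAbove m ≠ j := Fin.succAbove_ne j m
  simp only [contractAt, rightBracketAt, update_of_ne hm.symm, update_of_ne hmj.symm,
    update_comm hm, Fin.removeNth_update_succAbove]
  simp [Fin.removeNth, update_of_ne hm]

variable {K : Type*} [CommSemiring K] [AddCommMonoid L] [Module K L]

theorem sum_tprod_contractAt_rightBracketAt
    (hleib : ∀ x y z : L, b (b x y) z = b (b x z) y + b x (b y z))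
    (y : L) (v : Fin (n + 1) → L) {i j : Fin (n + 1)} (hij : i ≠ j) :
    ∑ k, tprod K (contractAt b (rightBracketAt b y v k) i j) =
      ∑ m, tprod K (rightBracketAt b y (contractAt b v i j) m) := by
  obtain ⟨i, rfl⟩ := Fin.exists_succAbove_eq hij
  rw [Fin.sum_univ_succAbove _ j, ← Finset.add_sum_erase _ _ (Finset.mem_univ i),
    ← Finset.add_sum_erase _ _ (Finset.mem_univ i), ← add_assoc]
  congr 1
  · have hij' : j.succAbove i ≠ j := Fin.succAbove_ne j i
    simp only [contractAt_succAbove, rightBracketAt, update_self, update_of_ne hij',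
      update_of_ne hij'.symm, Fin.removeNth_update, Fin.removeNth_update_succAbove, update_idem,
      hleib (v (j.succAbove i)) (v j) y]
    rw [add_comm]
    exact (MultilinearMap.map_update_add _ _ _ _ _).symm
  · refine Finset.sum_congr rfl fun m hm => ?_
    congr 1
    exact contractAt_rightBracketAt_succAbove y v
      (Fin.succAbove_right_injective.ne (Finset.ne_of_mem_erase hm))

end Contraction

theorem leibniz_differential_equivariant_adjoint_general
    {K L : Type*} [Field K] [AddCommGroup L] [Module K L]
    (b : L →ₗ[K] L →ₗ[K] L)
    (hleib : ∀ x y z : L, b (b x y) z = b (b x z) y + b x (b y z))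
    (d : ∀ n : ℕ, (⨂[K]^(n+1) L) →ₗ[K] (⨂[K]^n L))
    (hd : ∀ (n : ℕ) (v : Fin (n+1) → L),
      d n (tprod K v) = ∑ j : Fin (n+1), ∑ i ∈ Finset.Iio j,
        ((-1 : K) ^ ((j : ℕ) + 1)) •
          tprod K (j.removeNth (Function.update v i (b (v i) (v j)))))
    (ad : ∀ n : ℕ, L → ((⨂[K]^n L) →ₗ[K] (⨂[K]^n L)))
    (had : ∀ (n : ℕ) (y : L) (v : Fin n → L),
      ad n y (tprod K v) = ∑ i : Fin n, tprod K (Function.update v i (b (v i) y))) :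
    ∀ (n : ℕ) (y : L), (d n) ∘ₗ (ad (n+1) y) = (ad n y) ∘ₗ (d n) := by
  intro n y
  ext v
  simp only [LinearMap.compMultilinearMap_apply, LinearMap.coe_comp, Function.comp_apply, had, hd,
    map_sum, map_smul]
  rw [Finset.sum_comm]
  refine Finset.sum_congr rfl fun j _ => ?_
  rw [Finset.sum_comm]
  refine Finset.sum_congr rfl fun i hi => ?_
  rw [← Finset.smul_sum]
  congr 1
  exact sum_tprod_contractAt_rightBracketAt (b := fun x y => b x y) hleib y v
    (Finset.mem_Iio.mp hi).ne

/-- The adjoint action of a Leibniz algebra on its tensor powers,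
`[g_1 ⊗ ⋯ ⊗ g_n, g] = Σ_i g_1 ⊗ ⋯ ⊗ [g_i,g] ⊗ ⋯ ⊗ g_n`, commutes with the
Leibniz differential: `d [α, g] = [d α, g]`. -/
theorem leibniz_differential_equivariant_adjoint
    {K L : Type*} [Field K] [CharZero K] [AddCommGroup L] [Module K L]
    (b : L →ₗ[K] L →ₗ[K] L)
    (hleib : ∀ x y z : L, b (b x y) z = b (b x z) y + b x (b y z))
    (d : ∀ n : ℕ, (⨂[K]^(n+1) L) →ₗ[K] (⨂[K]^n L))
    (hd : ∀ (n : ℕ) (v : Fin (n+1) → L),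
      d n (tprod K v) = ∑ j : Fin (n+1), ∑ i ∈ Finset.Iio j,
        ((-1 : K) ^ ((j : ℕ) + 1)) •
          tprod K (j.removeNth (Function.update v i (b (v i) (v j)))))
    (ad : ∀ n : ℕ, L → ((⨂[K]^n L) →ₗ[K] (⨂[K]^n L)))
    (had : ∀ (n : ℕ) (y : L) (v : Fin n → L),
      ad n y (tprod K v) = ∑ i : Fin n, tprod K (Function.update v i (b (v i) y))) :
    ∀ (n : ℕ) (y : L), (d n) ∘ₗ (ad (n+1) y) = (ad n y) ∘ₗ (d n) :=
  leibniz_differential_equivariant_adjoint_general b hleib d hd ad had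
end

section
/- The tensor algebra T(V) with the half-shuffle product is the free Zinbiel algebra on V: any linear map f : V → A into a Zinbiel algebra A extends uniquely to a Zinbiel algebra morphism T(V) → A. -/
/-- The list of all shuffles (interleavings) of two words. -/
def shuffles {α : Type*} : List α → List α → List (List α)
  | [], l2 => [l2]
  | l1, [] => [l1]
  | a :: as, b :: bs =>
      ((shuffles as (b :: bs)).map (a :: ·)) ++ ((shuffles (a :: as) bs).map (b :: ·))
  termination_by l1 l2 => l1.length + l2.length

/-- The word `v_1 ⋯ v_n` viewed inside the tensor algebra. -/
noncomputable def listProd (K : Type*) {V : Type*} [Field K] [AddCommGroup V]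
    [Module K V] (l : List V) : TensorAlgebra K V :=
  (l.map (TensorAlgebra.ι K)).prod

/-!
The extension must send a nonempty word `v₁ ⋯ vₙ` to the right-nested product
`f v₁ ≺ (f v₂ ≺ (⋯ ≺ f vₙ))`, because `v₁ ⋯ vₙ = v₁ ≺ v₂ ⋯ vₙ` for the half-shuffle product.
This assignment respects `≺` by induction on the total length of the two words: the sum over all
shuffles of two nonempty words splits by first letter into two half-shuffles, so by induction it is
the symmetrized product `x ≺ y + y ≺ x`, and the Zinbiel identity
`(a ≺ x) ≺ y = a ≺ (x ≺ y + y ≺ x)` then gives the half-shuffle rule for the longer words.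
-/

section Shuffles

variable {α : Type*}

@[simp]
lemma shuffles_nil_left (l : List α) : shuffles [] l = [l] := by
  simp [shuffles]

@[simp]
lemma shuffles_nil_right (l : List α) : shuffles l [] = [l] := by
  cases l <;> simp [shuffles]

lemma shuffles_cons_cons (a b : α) (l1 l2 : List α) :
    shuffles (a :: l1) (b :: l2) =
      (shuffles l1 (b :: l2)).map (a :: ·) ++ (shuffles (a :: l1) l2).map (b :: ·) := by
  rw [shuffles]

lemma length_of_mem_shuffles {l1 l2 w : List α} (hw : w ∈ shuffles l1 l2) :
    w.length = l1.length + l2.length := by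
  induction l1, l2 using shuffles.induct generalizing w with
  | case1 l2 => simp_all
  | case2 l1 => simp_all
  | case3 a l1 b l2 ih1 ih2 =>
    simp only [shuffles_cons_cons, List.mem_append, List.mem_map] at hw
    rcases hw with ⟨w, hw, rfl⟩ | ⟨w, hw, rfl⟩
    · simp only [List.length_cons, ih1 hw]; omega
    · simp only [List.length_cons, ih2 hw]; omega

lemma ne_nil_of_mem_shuffles {l1 l2 w : List α} (hl2 : l2 ≠ []) (hw : w ∈ shuffles l1 l2) :
    w ≠ [] := by
  rintro rfl
  have := length_of_mem_shuffles hw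
  cases l2 <;> simp_all

lemma shuffles_perm_comm (l1 l2 : List α) : (shuffles l1 l2).Perm (shuffles l2 l1) := by
  induction l1, l2 using shuffles.induct with
  | case1 l2 => simp
  | case2 l1 => simp
  | case3 a l1 b l2 ih1 ih2 =>
    rw [shuffles_cons_cons, shuffles_cons_cons]
    exact ((ih1.map _).append (ih2.map _)).trans List.perm_append_comm

lemma sum_map_shuffles_cons_cons {M : Type*} [AddCommMonoid M] (g : List α → M)
    (a b : α) (l1 l2 : List α) :
    ((shuffles (a :: l1) (b :: l2)).map g).sum =
      ((shuffles l1 (b :: l2)).map (fun w => g (a :: w))).sum +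
        ((shuffles l2 (a :: l1)).map (fun w => g (b :: w))).sum := by
  rw [shuffles_cons_cons, List.map_append, List.sum_append, List.map_map, List.map_map,
    ((shuffles_perm_comm (a :: l1) l2).map _).sum_eq]
  rfl

end Shuffles

section ZinbielWord

variable {K V A : Type*} [CommSemiring K] [AddCommMonoid A] [Module K A]
  (z : A →ₗ[K] A →ₗ[K] A) (f : V → A)

def zinbielWord : List V → A
  | [] => 0
  | [a] => f a
  | a :: b :: l => z (f a) (zinbielWord (b :: l))

@[simp]
lemma zinbielWord_singleton (a : V) : zinbielWord z f [a] = f a := rfl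

lemma zinbielWord_cons (a : V) {l : List V} (hl : l ≠ []) :
    zinbielWord z f (a :: l) = z (f a) (zinbielWord z f l) := by
  obtain ⟨b, l, rfl⟩ := List.exists_cons_of_ne_nil hl
  rfl

lemma sum_map_shuffles_zinbielWord_cons (a : V) (l1 : List V) {l2 : List V} (hl2 : l2 ≠ []) :
    ((shuffles l1 l2).map (fun w => zinbielWord z f (a :: w))).sum =
      z (f a) ((shuffles l1 l2).map (zinbielWord z f)).sum := by
  rw [map_list_sum, List.map_map]
  exact congrArg List.sum <| List.map_congr_left fun w hw =>
    zinbielWord_cons z f a (ne_nil_of_mem_shuffles hl2 hw)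

theorem sum_map_shuffles_zinbielWord
    (hz : ∀ x y w : A, z (z x y) w = z x (z y w) + z x (z w y))
    (a : V) (l1 l2 : List V) (hl2 : l2 ≠ []) :
    ((shuffles l1 l2).map (fun w => zinbielWord z f (a :: w))).sum =
      z (zinbielWord z f (a :: l1)) (zinbielWord z f l2) := by
  rw [sum_map_shuffles_zinbielWord_cons z f a l1 hl2]
  match l1, l2, hl2 with
  | [], l2, _ => simp
  | c :: l1, d :: l2, _ =>
    have hsym : ((shuffles (c :: l1) (d :: l2)).map (zinbielWord z f)).sum =
        z (zinbielWord z f (c :: l1)) (zinbielWord z f (d :: l2)) +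
          z (zinbielWord z f (d :: l2)) (zinbielWord z f (c :: l1)) := by
      rw [sum_map_shuffles_cons_cons, sum_map_shuffles_zinbielWord hz c l1 (d :: l2) (by simp),
        sum_map_shuffles_zinbielWord hz d l2 (c :: l1) (by simp)]
    rw [hsym, zinbielWord_cons z f a (List.cons_ne_nil c l1), hz, map_add]
termination_by l1.length + l2.length

end ZinbielWord

lemma LinearMap.eqOn_span₂ {R M N P : Type*} [CommSemiring R] [AddCommMonoid M] [AddCommMonoid N]
    [AddCommMonoid P] [Module R M] [Module R N] [Module R P] {B B' : M →ₗ[R] N →ₗ[R] P}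
    {s : Set M} {t : Set N} (h : ∀ x ∈ s, ∀ y ∈ t, B x y = B' x y)
    {x : M} (hx : x ∈ Submodule.span R s) {y : N} (hy : y ∈ Submodule.span R t) :
    B x y = B' x y :=
  LinearMap.eqOn_span (f := B.flip y) (g := B'.flip y)
    (fun x hx => LinearMap.eqOn_span (f := B x) (g := B' x) (h x hx) hy) hx

section Extension

variable {K V A : Type*} [Field K] [AddCommGroup V] [Module K V] [AddCommMonoid A] [Module K A]
  (prec : TensorAlgebra K V →ₗ[K] TensorAlgebra K V →ₗ[K] TensorAlgebra K V)
  (z : A →ₗ[K] A →ₗ[K] A) (f : V →ₗ[K] A)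

@[simp]
lemma listProd_singleton (a : V) : listProd K [a] = TensorAlgebra.ι K a := by
  simp [listProd]

lemma listProd_cons (a : V) (l : List V) :
    listProd K (a :: l) = TensorAlgebra.ι K a * listProd K l := by
  simp [listProd]

/-- `v` acts on `K × A` by `(c, x) ↦ (0, c • f v + z (f v) x)`; the `K`-coordinate lets the
innermost letter of a word produce `f v` rather than a product. -/
noncomputable def zinbielAction : V →ₗ[K] Module.End K (K × A) :=
  ((LinearMap.smulRightₗ (LinearMap.fst K K A) + z.compl₂ (LinearMap.snd K K A)).compr₂
    (LinearMap.inr K K A)) ∘ₗ f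

lemma lift_zinbielAction_listProd {l : List V} (hl : l ≠ []) :
    TensorAlgebra.lift K (zinbielAction z f) (listProd K l) (1, 0) = (0, zinbielWord z f l) := by
  induction l with
  | nil => exact absurd rfl hl
  | cons a l ih =>
    rw [listProd_cons, map_mul, Module.End.mul_apply]
    rcases eq_or_ne l [] with rfl | hl'
    · simp [listProd, zinbielAction]
    · rw [ih hl']
      simp [zinbielAction, zinbielWord_cons z f a hl']

noncomputable def zinbielExtension : TensorAlgebra K V →ₗ[K] A :=
  LinearMap.snd K K A ∘ₗ LinearMap.applyₗ ((1 : K), (0 : A)) ∘ₗ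
    (TensorAlgebra.lift K (zinbielAction z f)).toLinearMap

lemma zinbielExtension_listProd {l : List V} (hl : l ≠ []) :
    zinbielExtension z f (listProd K l) = zinbielWord z f l := by
  simp [zinbielExtension, lift_zinbielAction_listProd z f hl]

@[simp]
lemma zinbielExtension_ι (v : V) : zinbielExtension z f (TensorAlgebra.ι K v) = f v := by
  simpa using zinbielExtension_listProd z f (List.cons_ne_nil v [])

lemma zinbielExtension_prec_listProd
    (hprec : ∀ (a : V) (l1 l2 : List V), l2 ≠ [] →
      prec (listProd K (a :: l1)) (listProd K l2)
        = ((shuffles l1 l2).map (fun w => listProd K (a :: w))).sum)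
    (hz : ∀ x y w : A, z (z x y) w = z x (z y w) + z x (z w y))
    {l1 l2 : List V} (hl1 : l1 ≠ []) (hl2 : l2 ≠ []) :
    zinbielExtension z f (prec (listProd K l1) (listProd K l2)) =
      z (zinbielExtension z f (listProd K l1)) (zinbielExtension z f (listProd K l2)) := by
  obtain ⟨a, l1, rfl⟩ := List.exists_cons_of_ne_nil hl1
  rw [hprec a l1 l2 hl2, map_list_sum, List.map_map, zinbielExtension_listProd z f hl1,
    zinbielExtension_listProd z f hl2, ← sum_map_shuffles_zinbielWord z f hz a l1 l2 hl2]
  exact congrArg List.sum <| List.map_congr_left fun w _ =>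
    zinbielExtension_listProd z f (List.cons_ne_nil a w)

lemma eq_zinbielWord_of_map_prec
    (hprec : ∀ (a : V) (l : List V), l ≠ [] →
      prec (listProd K [a]) (listProd K l) = listProd K (a :: l))
    (g : TensorAlgebra K V →ₗ[K] A) (hι : ∀ v : V, g (TensorAlgebra.ι K v) = f v)
    (hg : ∀ l1 l2 : List V, l1 ≠ [] → l2 ≠ [] →
      g (prec (listProd K l1) (listProd K l2)) = z (g (listProd K l1)) (g (listProd K l2)))
    {l : List V} (hl : l ≠ []) :
    g (listProd K l) = zinbielWord z f l := by
  induction l with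
  | nil => exact absurd rfl hl
  | cons a l ih =>
    rcases eq_or_ne l [] with rfl | hl'
    · simp [hι]
    · rw [← hprec a l hl', hg [a] l (List.cons_ne_nil a []) hl', ih hl', listProd_singleton, hι,
        zinbielWord_cons z f a hl']

end Extension

/-- The (reduced) tensor module with the half-shuffle product is the free
Zinbiel algebra on `V`: any linear map `f : V → A` to a Zinbiel algebra `A`
extends uniquely to a Zinbiel morphism. -/
theorem tensor_module_free_zinbiel
    {K V A : Type*} [Field K] [AddCommGroup V] [Module K V]
    [AddCommGroup A] [Module K A]
    (prec : TensorAlgebra K V →ₗ[K] TensorAlgebra K V →ₗ[K] TensorAlgebra K V)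
    (hprec : ∀ (a : V) (l1 l2 : List V), l2 ≠ [] →
      prec (listProd K (a :: l1)) (listProd K l2)
        = ((shuffles l1 l2).map (fun w => listProd K (a :: w))).sum)
    (z : A →ₗ[K] A →ₗ[K] A)
    (hz : ∀ x y w : A, z (z x y) w = z x (z y w) + z x (z w y))
    (f : V →ₗ[K] A) :
    let Tplus : Submodule K (TensorAlgebra K V) :=
      Submodule.span K {x : TensorAlgebra K V | ∃ l : List V, l ≠ [] ∧ x = listProd K l}
    ∃ g : TensorAlgebra K V →ₗ[K] A,
      ((∀ v : V, g (TensorAlgebra.ι K v) = f v) ∧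
        (∀ x ∈ Tplus, ∀ y ∈ Tplus, g (prec x y) = z (g x) (g y))) ∧
      (∀ g' : TensorAlgebra K V →ₗ[K] A,
        (∀ v : V, g' (TensorAlgebra.ι K v) = f v) →
        (∀ x ∈ Tplus, ∀ y ∈ Tplus, g' (prec x y) = z (g' x) (g' y)) →
        ∀ x ∈ Tplus, g' x = g x) := by
  intro Tplus
  have mem_Tplus : ∀ l : List V, l ≠ [] → listProd K l ∈ Tplus :=
    fun l hl => Submodule.subset_span ⟨l, hl, rfl⟩
  have hprec_singleton : ∀ (a : V) (l : List V), l ≠ [] →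
      prec (listProd K [a]) (listProd K l) = listProd K (a :: l) :=
    fun a l hl => by rw [hprec a [] l hl]; simp
  refine ⟨zinbielExtension z f, ⟨zinbielExtension_ι z f, fun x hx y hy => ?_⟩, ?_⟩
  · refine LinearMap.eqOn_span₂ (B := prec.compr₂ (zinbielExtension z f))
      (B' := z.compl₁₂ (zinbielExtension z f) (zinbielExtension z f)) ?_ hx hy
    rintro _ ⟨l1, hl1, rfl⟩ _ ⟨l2, hl2, rfl⟩
    exact zinbielExtension_prec_listProd prec z f hprec hz hl1 hl2
  · intro g hι hg x hx
    refine LinearMap.eqOn_span ?_ hx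
    rintro _ ⟨l, hl, rfl⟩
    rw [eq_zinbielWord_of_map_prec prec z f hprec_singleton g hι
      (fun l1 l2 hl1 hl2 => hg _ (mem_Tplus l1 hl1) _ (mem_Tplus l2 hl2)) hl,
      zinbielExtension_listProd z f hl]
end

section
/- The tensor coalgebra T(V) with deconcatenation coproduct is the cofree connected coassociative coalgebra on V: for any connected coaugmented coassociative coalgebra C and any linear map Φ : C → V with Φ(1) = 0, there is a unique coalgebra morphism Φ̃ : C → T(V) with p ∘ Φ̃ = Φ, where p : T(V) → V is the projection. -/
open scoped TensorProduct

/-- The coradical filtration of a coaugmented coalgebra `(C, Δ, 1 = u)`: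
`F_0 = K·u` and `F_r = {x | Δ̄(x) ∈ F_{r-1} ⊗ F_{r-1}}`,
where `Δ̄(x) = Δ(x) − u ⊗ x − x ⊗ u`. -/
noncomputable def coradFiltration {K C : Type*} [Field K] [AddCommGroup C] [Module K C]
    (Δ : C →ₗ[K] C ⊗[K] C) (u : C) : ℕ → Submodule K C
  | 0 => Submodule.span K {u}
  | r + 1 =>
      Submodule.comap (Δ - TensorProduct.mk K C C u - (TensorProduct.mk K C C).flip u)
        (LinearMap.range (TensorProduct.map
          (coradFiltration Δ u r).subtype (coradFiltration Δ u r).subtype))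

/-!
The lift is `Φ̃ = ∑ₙ Φ̃ₙ` with `Φ̃₀ = ε • 1` and `Φ̃ₙ₊₁(x) = ∑ Φ(x₁) · Φ̃ₙ(x₂)`, i.e.
`Φ̃ₙ = Φ^{⊗n} ∘ Δ^{(n-1)}` for `n ≥ 1`. Because `Φ(1) = 0`, `Φ̃ₙ` vanishes on `F_r` for `n > r`, so
on a connected coalgebra the sum is locally finite. Coassociativity gives
`Δ ∘ Φ̃ₙ = ∑_{p+q=n} (Φ̃_p ⊗ Φ̃_q) ∘ Δ`, which sums to `Δ ∘ Φ̃ = (Φ̃ ⊗ Φ̃) ∘ Δ`.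

For uniqueness, if two lifts agree on `F_r`, then on `F_{r+1}` their difference `y` is primitive
with `ε(y) = p(y) = 0`. Every `y ∈ T(V)` satisfies `y = ε(y) • 1 + ∑ p(y₁) · y₂` (peel off the
first letter of each word), and for such a primitive `y` the right-hand side is `0`.
-/

open TensorProduct

namespace TensorCoalgebra

section TensorProduct

variable {R M N P Q : Type*} [CommSemiring R] [AddCommMonoid M] [AddCommMonoid N]
  [AddCommMonoid P] [AddCommMonoid Q] [Module R M] [Module R N] [Module R P] [Module R Q]

lemma tmul_mem_range_mapIncl {p : Submodule R M} {q : Submodule R N} {x : M} {y : N}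
    (hx : x ∈ p) (hy : y ∈ q) : x ⊗ₜ[R] y ∈ LinearMap.range (mapIncl p q) :=
  ⟨⟨x, hx⟩ ⊗ₜ ⟨y, hy⟩, rfl⟩

lemma map_apply_eq_of_eqOn {p : Submodule R M} {q : Submodule R N} {f f' : M →ₗ[R] P}
    {g g' : N →ₗ[R] Q} (hf : Set.EqOn f f' p) (hg : Set.EqOn g g' q) {t : M ⊗[R] N}
    (ht : t ∈ LinearMap.range (mapIncl p q)) : map f g t = map f' g' t := by
  obtain ⟨s, rfl⟩ := ht
  have hfp : f ∘ₗ p.subtype = f' ∘ₗ p.subtype := LinearMap.ext fun x => hf x.2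
  have hgq : g ∘ₗ q.subtype = g' ∘ₗ q.subtype := LinearMap.ext fun y => hg y.2
  rw [map_map, map_map, hfp, hgq]

end TensorProduct

section Counit

variable {K C M N : Type*} [CommSemiring K] [AddCommMonoid C] [Module K C] [AddCommMonoid M]
  [Module K M] [AddCommMonoid N] [Module K N] {Δ : C →ₗ[K] C ⊗[K] C} {ε : C →ₗ[K] K}

lemma map_smulRight_comul_left
    (hcounitl : ∀ x : C, TensorProduct.lid K C (map ε LinearMap.id (Δ x)) = x)
    (f : C →ₗ[K] M) (m : N) (x : C) : map (ε.smulRight m) f (Δ x) = m ⊗ₜ f x := by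
  have : map (ε.smulRight m) f =
      mk K N M m ∘ₗ f ∘ₗ (TensorProduct.lid K C).toLinearMap ∘ₗ map ε LinearMap.id :=
    ext' fun a b => by simp [smul_tmul']
  rw [this]
  simp [hcounitl]

lemma map_smulRight_comul_right
    (hcounitr : ∀ x : C, TensorProduct.rid K C (map LinearMap.id ε (Δ x)) = x)
    (f : C →ₗ[K] M) (n : N) (x : C) : map f (ε.smulRight n) (Δ x) = f x ⊗ₜ n := by
  have : map f (ε.smulRight n) =
      (mk K M N).flip n ∘ₗ f ∘ₗ (TensorProduct.rid K C).toLinearMap ∘ₗ map LinearMap.id ε :=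
    ext' fun a b => by simp [smul_tmul']
  rw [this]
  simp [hcounitr]

end Counit

section CoradFiltration

variable {K C : Type*} [Field K] [AddCommGroup C] [Module K C] {Δ : C →ₗ[K] C ⊗[K] C} {u : C}

variable (Δ u) in
noncomputable def reducedComul : C →ₗ[K] C ⊗[K] C :=
  Δ - mk K C C u - (mk K C C).flip u

lemma comul_eq_reducedComul_add (x : C) : Δ x = reducedComul Δ u x + u ⊗ₜ x + x ⊗ₜ u := by
  simp only [reducedComul, LinearMap.sub_apply, mk_apply, LinearMap.flip_apply]
  abel

lemma mem_coradFiltration_succ {r : ℕ} {x : C} :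
    x ∈ coradFiltration Δ u (r + 1) ↔ reducedComul Δ u x ∈
      LinearMap.range (mapIncl (coradFiltration Δ u r) (coradFiltration Δ u r)) :=
  Iff.rfl

lemma unit_mem_coradFiltration (huΔ : Δ u = u ⊗ₜ u) : ∀ r, u ∈ coradFiltration Δ u r
  | 0 => Submodule.mem_span_singleton_self u
  | r + 1 => by
    have hu := unit_mem_coradFiltration huΔ r
    have : reducedComul Δ u u = -(u ⊗ₜ u) := by simp [reducedComul, huΔ]
    rw [mem_coradFiltration_succ, this]
    exact neg_mem (tmul_mem_range_mapIncl hu hu)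

lemma coradFiltration_le_succ (huΔ : Δ u = u ⊗ₜ u) :
    ∀ r, coradFiltration Δ u r ≤ coradFiltration Δ u (r + 1)
  | 0 => (Submodule.span_singleton_le_iff_mem _ _).2 (unit_mem_coradFiltration huΔ 1)
  | r + 1 => fun _ hx =>
    range_mapIncl_mono (coradFiltration_le_succ huΔ r) (coradFiltration_le_succ huΔ r) hx

lemma comul_mem_range_mapIncl (huΔ : Δ u = u ⊗ₜ u) {r : ℕ} {x : C}
    (hx : x ∈ coradFiltration Δ u r) :
    Δ x ∈ LinearMap.range (mapIncl (coradFiltration Δ u r) (coradFiltration Δ u r)) := by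
  have hu := unit_mem_coradFiltration huΔ r
  cases r with
  | zero =>
    obtain ⟨a, rfl⟩ := Submodule.mem_span_singleton.1 hx
    rw [map_smul, huΔ]
    exact Submodule.smul_mem _ _ (tmul_mem_range_mapIncl hu hu)
  | succ r =>
    have hle := coradFiltration_le_succ huΔ r
    rw [comul_eq_reducedComul_add (u := u)]
    exact add_mem (add_mem (range_mapIncl_mono hle hle hx) (tmul_mem_range_mapIncl hu hx))
      (tmul_mem_range_mapIncl hx hu)

end CoradFiltration

section Words

variable {K V : Type*} [Field K] [AddCommGroup V] [Module K V]

@[simp]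
lemma listProd_nil : listProd K ([] : List V) = 1 := rfl

lemma listProd_cons (v : V) (l : List V) :
    listProd K (v :: l) = TensorAlgebra.ι K v * listProd K l := by
  simp [listProd]

lemma listProd_append (l l' : List V) :
    listProd K (l ++ l') = listProd K l * listProd K l' := by
  simp [listProd]

lemma span_range_listProd : Submodule.span K (Set.range (listProd K (V := V))) = ⊤ := by
  have hclosure : (Submonoid.closure (Set.range (TensorAlgebra.ι K (M := V))) :
      Set (TensorAlgebra K V)) ⊆ Set.range (listProd K) := fun x hx => by
    induction hx using Submonoid.closure_induction with
    | mem x hx => obtain ⟨v, rfl⟩ := hx; exact ⟨[v], by simp [listProd]⟩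
    | one => exact ⟨[], rfl⟩
    | mul x y _ _ hx hy =>
      obtain ⟨l, rfl⟩ := hx
      obtain ⟨l', rfl⟩ := hy
      exact ⟨l ++ l', listProd_append l l'⟩
  rw [eq_top_iff, ← Algebra.top_toSubmodule, ← TensorAlgebra.adjoin_range_ι,
    Algebra.adjoin_eq_span]
  exact Submodule.span_mono hclosure

variable (K V) in
noncomputable def wordSpan (n : ℕ) : Submodule K (TensorAlgebra K V) :=
  Submodule.span K (listProd K '' {l | l.length = n})

lemma ι_mul_mem_wordSpan {n : ℕ} {w : TensorAlgebra K V} (hw : w ∈ wordSpan K V n) (v : V) :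
    TensorAlgebra.ι K v * w ∈ wordSpan K V (n + 1) := by
  have : wordSpan K V n ≤
      (wordSpan K V (n + 1)).comap (LinearMap.mulLeft K (TensorAlgebra.ι K v)) := by
    refine Submodule.span_le.2 ?_
    rintro _ ⟨l, hl, rfl⟩
    exact Submodule.subset_span ⟨v :: l, by simp_all, (listProd_cons v l).symm⟩
  exact this hw

lemma wordSpan_succ_le_ker {εT : TensorAlgebra K V →ₗ[K] K}
    (hεT : ∀ l : List V, l ≠ [] → εT (listProd K l) = 0) (n : ℕ) :
    wordSpan K V (n + 1) ≤ LinearMap.ker εT := by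
  refine Submodule.span_le.2 ?_
  rintro _ ⟨l, hl, rfl⟩
  exact hεT l (by rintro rfl; simp at hl)

lemma wordSpan_add_two_le_ker {proj : TensorAlgebra K V →ₗ[K] V}
    (hproj : ∀ l : List V, 2 ≤ l.length → proj (listProd K l) = 0) (n : ℕ) :
    wordSpan K V (n + 2) ≤ LinearMap.ker proj := by
  refine Submodule.span_le.2 ?_
  rintro _ ⟨l, hl, rfl⟩
  exact hproj l (by simp_all)

end Words

section Deconcatenation

variable {K V : Type*} [Field K] [AddCommGroup V] [Module K V]
  {ΔT : TensorAlgebra K V →ₗ[K] TensorAlgebra K V ⊗[K] TensorAlgebra K V}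

def IsDeconcatenation
    (ΔT : TensorAlgebra K V →ₗ[K] TensorAlgebra K V ⊗[K] TensorAlgebra K V) : Prop :=
  ∀ l : List V, ΔT (listProd K l) = ∑ p ∈ Finset.range (l.length + 1),
    listProd K (l.take p) ⊗ₜ[K] listProd K (l.drop p)

lemma IsDeconcatenation.apply_one (hΔT : IsDeconcatenation ΔT) : ΔT 1 = 1 ⊗ₜ 1 := by
  simpa using hΔT []

lemma IsDeconcatenation.apply_ι_mul (hΔT : IsDeconcatenation ΔT) (v : V)
    (w : TensorAlgebra K V) :
    ΔT (TensorAlgebra.ι K v * w) =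
      1 ⊗ₜ (TensorAlgebra.ι K v * w) +
        map (LinearMap.mulLeft K (TensorAlgebra.ι K v)) LinearMap.id (ΔT w) := by
  let f := ΔT ∘ₗ LinearMap.mulLeft K (TensorAlgebra.ι K v)
  let g := mk K _ _ 1 ∘ₗ LinearMap.mulLeft K (TensorAlgebra.ι K v) +
    map (LinearMap.mulLeft K (TensorAlgebra.ι K v)) LinearMap.id ∘ₗ ΔT
  suffices f = g from LinearMap.congr_fun this w
  refine LinearMap.ext_on span_range_listProd ?_
  rintro _ ⟨l, rfl⟩
  show ΔT (TensorAlgebra.ι K v * listProd K l) = _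
  rw [← listProd_cons, hΔT, List.length_cons, Finset.sum_range_succ']
  simp [g, hΔT l, listProd_cons, add_comm]

variable {εT : TensorAlgebra K V →ₗ[K] K} {proj : TensorAlgebra K V →ₗ[K] V}

lemma IsDeconcatenation.mul'_map_proj_apply (hΔT : IsDeconcatenation ΔT) (hεT1 : εT 1 = 1)
    (hεT : ∀ l : List V, l ≠ [] → εT (listProd K l) = 0) (hproj1 : proj 1 = 0)
    (hprojι : ∀ v : V, proj (TensorAlgebra.ι K v) = v)
    (hproj : ∀ l : List V, 2 ≤ l.length → proj (listProd K l) = 0) (y : TensorAlgebra K V) :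
    LinearMap.mul' K _ (map (TensorAlgebra.ι K ∘ₗ proj) LinearMap.id (ΔT y)) = y - εT y • 1 := by
  let f := LinearMap.mul' K _ ∘ₗ map (TensorAlgebra.ι K ∘ₗ proj) LinearMap.id ∘ₗ ΔT
  let g := LinearMap.id - εT.smulRight (1 : TensorAlgebra K V)
  suffices f = g from LinearMap.congr_fun this y
  refine LinearMap.ext_on span_range_listProd ?_
  rintro _ ⟨l, rfl⟩
  rcases l with _ | ⟨a, l⟩
  · simp [f, g, hΔT.apply_one, hproj1, hεT1]
  · simp only [f, g, LinearMap.comp_apply, hΔT (a :: l), map_sum, map_tmul, LinearMap.sub_apply,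
      LinearMap.smulRight_apply, hεT (a :: l) (List.cons_ne_nil a l), zero_smul, sub_zero]
    rw [Finset.sum_range_succ', Finset.sum_eq_single 0]
    · simp [listProd_cons, hprojι, hproj1]
    · intro p hpl hp
      obtain ⟨p, rfl⟩ := Nat.exists_eq_succ_of_ne_zero hp
      have hlen : 2 ≤ (a :: List.take (p + 1) l).length := by simp at hpl ⊢; omega
      simp [hproj _ hlen]
    · simp

lemma IsDeconcatenation.eq_zero_of_primitive (hΔT : IsDeconcatenation ΔT) (hεT1 : εT 1 = 1)
    (hεT : ∀ l : List V, l ≠ [] → εT (listProd K l) = 0) (hproj1 : proj 1 = 0)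
    (hprojι : ∀ v : V, proj (TensorAlgebra.ι K v) = v)
    (hproj : ∀ l : List V, 2 ≤ l.length → proj (listProd K l) = 0) {y : TensorAlgebra K V}
    (hy : ΔT y = 1 ⊗ₜ y + y ⊗ₜ 1) (hεy : εT y = 0) (hpy : proj y = 0) : y = 0 := by
  simpa [hy, hεy, hpy, hproj1] using
    (hΔT.mul'_map_proj_apply hεT1 hεT hproj1 hprojι hproj y).symm

end Deconcatenation

lemma sum_range_diag_eq_sum_range_sq {M : Type*} [AddCommMonoid M] (r : ℕ) (c : ℕ → ℕ → M)
    (hc : ∀ p q, r < p ∨ r < q → c p q = 0) :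
    ∑ n ∈ Finset.range (2 * r + 1), ∑ p ∈ Finset.range (n + 1), c p (n - p) =
      ∑ p ∈ Finset.range (r + 1), ∑ q ∈ Finset.range (r + 1), c p q := by
  rw [Finset.sum_range_diag_flip]
  have hrow (p : ℕ) : ∑ q ∈ Finset.range (2 * r + 1 - p), c p q =
      ∑ q ∈ Finset.range (r + 1), c p q := by
    by_cases hp : p ≤ r
    · refine (Finset.sum_subset (Finset.range_subset_range.2 (by omega)) fun q hq hqr => ?_).symm
      exact hc p q (Or.inr (by simpa using hqr))
    · rw [Finset.sum_eq_zero fun q _ => hc p q (Or.inl (by omega)),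
        Finset.sum_eq_zero fun q _ => hc p q (Or.inl (by omega))]
  simp_rw [hrow]
  refine (Finset.sum_subset (Finset.range_subset_range.2 (by omega)) fun p _ hpr => ?_).symm
  exact Finset.sum_eq_zero fun q _ => hc p q (Or.inl (by simpa using hpr))

section Components

variable {K V C : Type*} [Field K] [AddCommGroup V] [Module K V] [AddCommGroup C] [Module K C]
  {Δ : C →ₗ[K] C ⊗[K] C} {ε : C →ₗ[K] K} {u : C} {Φ : C →ₗ[K] V}

variable (Φ) in
noncomputable def prependMap (f : C →ₗ[K] TensorAlgebra K V) :
    C ⊗[K] C →ₗ[K] TensorAlgebra K V :=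
  LinearMap.mul' K _ ∘ₗ map (TensorAlgebra.ι K ∘ₗ Φ) f

@[simp]
lemma prependMap_tmul (f : C →ₗ[K] TensorAlgebra K V) (a b : C) :
    prependMap Φ f (a ⊗ₜ b) = TensorAlgebra.ι K (Φ a) * f b := by
  simp [prependMap]

variable (Δ ε Φ) in
noncomputable def liftComponent : ℕ → C →ₗ[K] TensorAlgebra K V
  | 0 => ε.smulRight 1
  | n + 1 => prependMap Φ (liftComponent n) ∘ₗ Δ

lemma liftComponent_zero : liftComponent Δ ε Φ 0 = ε.smulRight 1 := rfl

lemma liftComponent_succ_apply (n : ℕ) (x : C) :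
    liftComponent Δ ε Φ (n + 1) x = prependMap Φ (liftComponent Δ ε Φ n) (Δ x) := rfl

lemma liftComponent_one_apply
    (hcounitr : ∀ x : C, TensorProduct.rid K C (map LinearMap.id ε (Δ x)) = x) (x : C) :
    liftComponent Δ ε Φ 1 x = TensorAlgebra.ι K (Φ x) := by
  rw [liftComponent_succ_apply, prependMap, LinearMap.comp_apply, liftComponent_zero,
    map_smulRight_comul_right hcounitr]
  simp

lemma liftComponent_succ_apply_unit (huΔ : Δ u = u ⊗ₜ u) (hΦ : Φ u = 0) (n : ℕ) :
    liftComponent Δ ε Φ (n + 1) u = 0 := by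
  simp [liftComponent_succ_apply, huΔ, hΦ]

lemma liftComponent_mem_wordSpan : ∀ (n : ℕ) (x : C), liftComponent Δ ε Φ n x ∈ wordSpan K V n
  | 0, x => Submodule.smul_mem _ _ (Submodule.subset_span ⟨[], rfl, rfl⟩)
  | n + 1, x => by
    rw [liftComponent_succ_apply]
    induction Δ x using TensorProduct.induction_on with
    | zero => simp
    | tmul a b =>
      rw [prependMap_tmul]
      exact ι_mul_mem_wordSpan (liftComponent_mem_wordSpan n b) _
    | add s t hs ht => rw [map_add]; exact add_mem hs ht

lemma coradFiltration_le_ker_liftComponent (huΔ : Δ u = u ⊗ₜ u) (hΦ : Φ u = 0) {r n : ℕ}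
    (hrn : r < n) : coradFiltration Δ u r ≤ LinearMap.ker (liftComponent Δ ε Φ n) := by
  induction r generalizing n with
  | zero =>
    obtain ⟨m, rfl⟩ : ∃ m, n = m + 1 := ⟨n - 1, by omega⟩
    exact (Submodule.span_singleton_le_iff_mem _ _).2 (liftComponent_succ_apply_unit huΔ hΦ m)
  | succ r ih =>
    obtain ⟨m, rfl⟩ : ∃ m, n = m + 2 := ⟨n - 2, by omega⟩
    intro x hx
    have hreduced : map (TensorAlgebra.ι K ∘ₗ Φ) (liftComponent Δ ε Φ (m + 1))
        (reducedComul Δ u x) = 0 := by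
      simpa using map_apply_eq_of_eqOn (Set.eqOn_refl _ _) (g' := 0)
        (fun y hy => ih (by omega) hy) (mem_coradFiltration_succ.1 hx)
    rw [LinearMap.mem_ker, liftComponent_succ_apply, comul_eq_reducedComul_add (u := u)]
    simp [prependMap, hreduced, hΦ, liftComponent_succ_apply_unit huΔ hΦ]

lemma map_mulLeft_map_eq (f g : C →ₗ[K] TensorAlgebra K V) (a : C) (s : C ⊗[K] C) :
    map (LinearMap.mulLeft K (TensorAlgebra.ι K (Φ a))) LinearMap.id (map f g s) =
      map (prependMap Φ f) g ((TensorProduct.assoc K C C C).symm (a ⊗ₜ s)) := by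
  induction s using TensorProduct.induction_on with
  | zero => simp
  | tmul b c => simp
  | add s t hs ht => simp [tmul_add, hs, ht]

variable {ΔT : TensorAlgebra K V →ₗ[K] TensorAlgebra K V ⊗[K] TensorAlgebra K V}

lemma IsDeconcatenation.apply_prependMap (hΔT : IsDeconcatenation ΔT) {n : ℕ}
    (ih : ∀ y : C, ΔT (liftComponent Δ ε Φ n y) = ∑ p ∈ Finset.range (n + 1),
      map (liftComponent Δ ε Φ p) (liftComponent Δ ε Φ (n - p)) (Δ y))
    (t : C ⊗[K] C) :
    ΔT (prependMap Φ (liftComponent Δ ε Φ n) t) =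
      1 ⊗ₜ prependMap Φ (liftComponent Δ ε Φ n) t + ∑ p ∈ Finset.range (n + 1),
        map (prependMap Φ (liftComponent Δ ε Φ p)) (liftComponent Δ ε Φ (n - p))
          ((TensorProduct.assoc K C C C).symm (map LinearMap.id Δ t)) := by
  induction t using TensorProduct.induction_on with
  | zero => simp
  | tmul a b => simp [hΔT.apply_ι_mul, ih, map_mulLeft_map_eq]
  | add s t hs ht =>
    simp only [map_add, hs, ht, tmul_add, Finset.sum_add_distrib]
    abel

theorem IsDeconcatenation.apply_liftComponent (hΔT : IsDeconcatenation ΔT)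
    (hcoassoc : ∀ x : C, TensorProduct.assoc K C C C (map Δ LinearMap.id (Δ x)) =
      map LinearMap.id Δ (Δ x))
    (hcounitl : ∀ x : C, TensorProduct.lid K C (map ε LinearMap.id (Δ x)) = x) :
    ∀ (n : ℕ) (x : C), ΔT (liftComponent Δ ε Φ n x) = ∑ p ∈ Finset.range (n + 1),
      map (liftComponent Δ ε Φ p) (liftComponent Δ ε Φ (n - p)) (Δ x)
  | 0, x => by
    simp [liftComponent_zero, map_smulRight_comul_left hcounitl, hΔT.apply_one]
  | n + 1, x => by
    have hcoassoc' : (TensorProduct.assoc K C C C).symm (map LinearMap.id Δ (Δ x)) =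
        map Δ LinearMap.id (Δ x) :=
      (LinearEquiv.symm_apply_eq _).2 (hcoassoc x).symm
    rw [liftComponent_succ_apply,
      hΔT.apply_prependMap (hΔT.apply_liftComponent hcoassoc hcounitl n), hcoassoc', Finset.sum_range_succ' _ (n + 1), liftComponent_zero,
      map_smulRight_comul_left hcounitl, add_comm]
    congr 1
    refine Finset.sum_congr rfl fun p _ => ?_
    rw [map_map, Nat.add_sub_add_right]
    rfl

lemma support_liftComponent_subset (huΔ : Δ u = u ⊗ₜ u) (hΦ : Φ u = 0) {r N : ℕ} {x : C}
    (hx : x ∈ coradFiltration Δ u r) (hN : r ≤ N) :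
    Function.support (fun n => liftComponent Δ ε Φ n x) ⊆ Finset.range (N + 1) := by
  intro n hn
  by_contra h
  simp only [Finset.coe_range, Set.mem_Iio, not_lt] at h
  exact hn (coradFiltration_le_ker_liftComponent huΔ hΦ (by omega) hx)

lemma hasFiniteSupport_liftComponent (huΔ : Δ u = u ⊗ₜ u) (hΦ : Φ u = 0)
    (hconn : ∀ x : C, ∃ r, x ∈ coradFiltration Δ u r) (x : C) :
    (fun n => liftComponent Δ ε Φ n x).HasFiniteSupport := by
  obtain ⟨r, hx⟩ := hconn x
  exact (Finset.range (r + 1)).finite_toSet.subset (support_liftComponent_subset huΔ hΦ hx le_rfl)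

variable (Δ ε Φ) in
noncomputable def cofreeLift
    (hfin : ∀ x : C, (fun n => liftComponent Δ ε Φ n x).HasFiniteSupport) :
    C →ₗ[K] TensorAlgebra K V where
  toFun x := ∑ᶠ n, liftComponent Δ ε Φ n x
  map_add' x y := by
    simp only [map_add]
    exact finsum_add_distrib (hfin x) (hfin y)
  map_smul' c x := by
    simp only [map_smul, RingHom.id_apply]
    exact (smul_finsum' c (hfin x)).symm

variable {hfin : ∀ x : C, (fun n => liftComponent Δ ε Φ n x).HasFiniteSupport}

lemma cofreeLift_apply_of_mem (huΔ : Δ u = u ⊗ₜ u) (hΦ : Φ u = 0) {r N : ℕ} {x : C}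
    (hx : x ∈ coradFiltration Δ u r) (hN : r ≤ N) :
    cofreeLift Δ ε Φ hfin x = ∑ n ∈ Finset.range (N + 1), liftComponent Δ ε Φ n x :=
  finsum_eq_sum_of_support_subset _ (support_liftComponent_subset huΔ hΦ hx hN)

lemma cofreeLift_unit (huΔ : Δ u = u ⊗ₜ u) (hΦ : Φ u = 0) (huε : ε u = 1) :
    cofreeLift Δ ε Φ hfin u = 1 := by
  rw [cofreeLift_apply_of_mem huΔ hΦ (unit_mem_coradFiltration huΔ 0) le_rfl]
  simp [liftComponent_zero, huε]

lemma counit_cofreeLift (huΔ : Δ u = u ⊗ₜ u) (hΦ : Φ u = 0)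
    (hconn : ∀ x : C, ∃ r, x ∈ coradFiltration Δ u r) {εT : TensorAlgebra K V →ₗ[K] K}
    (hεT1 : εT 1 = 1) (hεT : ∀ l : List V, l ≠ [] → εT (listProd K l) = 0) (x : C) :
    εT (cofreeLift Δ ε Φ hfin x) = ε x := by
  obtain ⟨r, hx⟩ := hconn x
  rw [cofreeLift_apply_of_mem huΔ hΦ hx le_rfl, map_sum, Finset.sum_range_succ',
    Finset.sum_eq_zero fun n _ => wordSpan_succ_le_ker hεT n (liftComponent_mem_wordSpan _ x)]
  simp [liftComponent_zero, hεT1]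

lemma proj_cofreeLift (huΔ : Δ u = u ⊗ₜ u) (hΦ : Φ u = 0)
    (hconn : ∀ x : C, ∃ r, x ∈ coradFiltration Δ u r)
    (hcounitr : ∀ x : C, TensorProduct.rid K C (map LinearMap.id ε (Δ x)) = x)
    {proj : TensorAlgebra K V →ₗ[K] V} (hproj1 : proj 1 = 0)
    (hprojι : ∀ v : V, proj (TensorAlgebra.ι K v) = v)
    (hproj : ∀ l : List V, 2 ≤ l.length → proj (listProd K l) = 0) (x : C) :
    proj (cofreeLift Δ ε Φ hfin x) = Φ x := by
  obtain ⟨r, hx⟩ := hconn x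
  rw [cofreeLift_apply_of_mem huΔ hΦ hx (Nat.le_succ r), map_sum, Finset.sum_range_succ',
    Finset.sum_range_succ',
    Finset.sum_eq_zero fun n _ => wordSpan_add_two_le_ker hproj n (liftComponent_mem_wordSpan _ x)]
  simp [liftComponent_zero, liftComponent_one_apply hcounitr, hproj1, hprojι]

lemma comul_cofreeLift (huΔ : Δ u = u ⊗ₜ u) (hΦ : Φ u = 0)
    (hconn : ∀ x : C, ∃ r, x ∈ coradFiltration Δ u r) (hΔT : IsDeconcatenation ΔT)
    (hcoassoc : ∀ x : C, TensorProduct.assoc K C C C (map Δ LinearMap.id (Δ x)) =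
      map LinearMap.id Δ (Δ x))
    (hcounitl : ∀ x : C, TensorProduct.lid K C (map ε LinearMap.id (Δ x)) = x) (x : C) :
    ΔT (cofreeLift Δ ε Φ hfin x) = map (cofreeLift Δ ε Φ hfin) (cofreeLift Δ ε Φ hfin) (Δ x) := by
  obtain ⟨r, hx⟩ := hconn x
  have hΔx := comul_mem_range_mapIncl huΔ hx
  have htrunc : Set.EqOn (cofreeLift Δ ε Φ hfin)
      ⇑(∑ p ∈ Finset.range (r + 1), liftComponent Δ ε Φ p) (coradFiltration Δ u r) :=
    fun y hy => by rw [cofreeLift_apply_of_mem huΔ hΦ hy le_rfl, LinearMap.sum_apply]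
  have hvanish (p q : ℕ) (h : r < p ∨ r < q) :
      map (liftComponent Δ ε Φ p) (liftComponent Δ ε Φ q) (Δ x) = 0 := by
    have hker {n : ℕ} (hn : r < n) : Set.EqOn (liftComponent Δ ε Φ n)
        ⇑(0 : C →ₗ[K] TensorAlgebra K V) (coradFiltration Δ u r) :=
      fun y hy => coradFiltration_le_ker_liftComponent huΔ hΦ hn hy
    rcases h with h | h
    · simpa using map_apply_eq_of_eqOn (hker h) (Set.eqOn_refl _ _) hΔx
    · simpa using map_apply_eq_of_eqOn (Set.eqOn_refl _ _) (hker h) hΔx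
  -- both sides become sums of `hvanish`'s terms: over `p + q ≤ 2 * r` and over `p, q ≤ r`
  rw [cofreeLift_apply_of_mem huΔ hΦ hx (by omega : r ≤ 2 * r), map_sum,
    map_apply_eq_of_eqOn htrunc htrunc hΔx]
  simp_rw [hΔT.apply_liftComponent hcoassoc hcounitl]
  rw [sum_range_diag_eq_sum_range_sq r _ hvanish]
  simp only [← mapBilinear_apply, map_sum, LinearMap.sum_apply]
  exact Finset.sum_comm

end Components

section Uniqueness

variable {K V C : Type*} [Field K] [AddCommGroup V] [Module K V] [AddCommGroup C] [Module K C]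

def IsCofreeLift (ΔT : TensorAlgebra K V →ₗ[K] TensorAlgebra K V ⊗[K] TensorAlgebra K V)
    (εT : TensorAlgebra K V →ₗ[K] K) (proj : TensorAlgebra K V →ₗ[K] V)
    (Δ : C →ₗ[K] C ⊗[K] C) (ε : C →ₗ[K] K) (u : C) (Φ : C →ₗ[K] V)
    (g : C →ₗ[K] TensorAlgebra K V) : Prop :=
  g u = 1 ∧ (∀ x : C, ΔT (g x) = map g g (Δ x)) ∧ (∀ x : C, εT (g x) = ε x) ∧
    ∀ x : C, proj (g x) = Φ x

variable {ΔT : TensorAlgebra K V →ₗ[K] TensorAlgebra K V ⊗[K] TensorAlgebra K V}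
  {εT : TensorAlgebra K V →ₗ[K] K} {proj : TensorAlgebra K V →ₗ[K] V}
  {Δ : C →ₗ[K] C ⊗[K] C} {ε : C →ₗ[K] K} {u : C} {Φ : C →ₗ[K] V}

lemma IsCofreeLift.comul_sub_eq_of_eqOn {g₁ g₂ : C →ₗ[K] TensorAlgebra K V}
    (h₁ : IsCofreeLift ΔT εT proj Δ ε u Φ g₁) (h₂ : IsCofreeLift ΔT εT proj Δ ε u Φ g₂) {r : ℕ}
    (heq : Set.EqOn g₁ g₂ (coradFiltration Δ u r)) {x : C}
    (hx : x ∈ coradFiltration Δ u (r + 1)) :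
    ΔT (g₁ x - g₂ x) = 1 ⊗ₜ (g₁ x - g₂ x) + (g₁ x - g₂ x) ⊗ₜ 1 := by
  rw [map_sub, h₁.2.1, h₂.2.1, comul_eq_reducedComul_add (u := u)]
  simp only [map_add, map_apply_eq_of_eqOn heq heq (mem_coradFiltration_succ.1 hx), map_tmul,
    h₁.1, h₂.1, tmul_sub, sub_tmul]
  abel

theorem IsCofreeLift.unique (hΔT : IsDeconcatenation ΔT) (hεT1 : εT 1 = 1)
    (hεT : ∀ l : List V, l ≠ [] → εT (listProd K l) = 0) (hproj1 : proj 1 = 0)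
    (hprojι : ∀ v : V, proj (TensorAlgebra.ι K v) = v)
    (hproj : ∀ l : List V, 2 ≤ l.length → proj (listProd K l) = 0)
    (hconn : ∀ x : C, ∃ r, x ∈ coradFiltration Δ u r) {g₁ g₂ : C →ₗ[K] TensorAlgebra K V}
    (h₁ : IsCofreeLift ΔT εT proj Δ ε u Φ g₁) (h₂ : IsCofreeLift ΔT εT proj Δ ε u Φ g₂) :
    g₁ = g₂ := by
  have heq (r : ℕ) : Set.EqOn g₁ g₂ (coradFiltration Δ u r) := by
    induction r with
    | zero =>
      intro x hx
      obtain ⟨a, rfl⟩ := Submodule.mem_span_singleton.1 hx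
      simp [h₁.1, h₂.1]
    | succ r ih =>
      intro x hx
      refine sub_eq_zero.1 (hΔT.eq_zero_of_primitive hεT1 hεT hproj1 hprojι hproj
        (h₁.comul_sub_eq_of_eqOn h₂ ih hx) ?_ ?_)
      · simp [h₁.2.2.1, h₂.2.2.1]
      · simp [h₁.2.2.2, h₂.2.2.2]
  ext x
  obtain ⟨r, hx⟩ := hconn x
  exact heq r hx

end Uniqueness

end TensorCoalgebra

open TensorCoalgebra

/-- The tensor coalgebra `T(V)` with deconcatenation coproduct is the cofree
connected coassociative coalgebra on `V`: for any connected coaugmented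
coassociative coalgebra `C` and any linear map `Φ : C → V` with `Φ(1) = 0`,
there is a unique coaugmented coalgebra morphism `Φ̃ : C → T(V)` with
`p ∘ Φ̃ = Φ`, where `p : T(V) → V` is the projection onto `V`. -/
theorem tensor_coalgebra_cofree
    {K V C : Type*} [Field K] [AddCommGroup V] [Module K V]
    [AddCommGroup C] [Module K C]
    -- deconcatenation coproduct, counit and projection on T(V)
    (ΔT : TensorAlgebra K V →ₗ[K] TensorAlgebra K V ⊗[K] TensorAlgebra K V)
    (hΔT : ∀ l : List V,
      ΔT (listProd K l) = ∑ p ∈ Finset.range (l.length + 1),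
        listProd K (l.take p) ⊗ₜ[K] listProd K (l.drop p))
    (εT : TensorAlgebra K V →ₗ[K] K)
    (hεT1 : εT 1 = 1)
    (hεT : ∀ l : List V, l ≠ [] → εT (listProd K l) = 0)
    (proj : TensorAlgebra K V →ₗ[K] V)
    (hproj1 : proj 1 = 0)
    (hprojι : ∀ v : V, proj (TensorAlgebra.ι K v) = v)
    (hproj : ∀ l : List V, 2 ≤ l.length → proj (listProd K l) = 0)
    -- the connected coaugmented coassociative coalgebra C
    (ΔC : C →ₗ[K] C ⊗[K] C) (εC : C →ₗ[K] K) (uC : C)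
    (hcoassoc : ∀ x : C,
      (TensorProduct.assoc K C C C) ((TensorProduct.map ΔC LinearMap.id) (ΔC x))
        = (TensorProduct.map LinearMap.id ΔC) (ΔC x))
    (hcounitl : ∀ x : C,
      (TensorProduct.lid K C) ((TensorProduct.map εC LinearMap.id) (ΔC x)) = x)
    (hcounitr : ∀ x : C,
      (TensorProduct.rid K C) ((TensorProduct.map LinearMap.id εC) (ΔC x)) = x)
    (huΔ : ΔC uC = uC ⊗ₜ[K] uC) (huε : εC uC = 1)
    (hconn : ∀ x : C, ∃ r : ℕ, x ∈ coradFiltration ΔC uC r)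
    -- the map to be extended
    (Φ : C →ₗ[K] V) (hΦ1 : Φ uC = 0) :
    ∃! g : C →ₗ[K] TensorAlgebra K V,
      g uC = 1 ∧
      (∀ x : C, ΔT (g x) = (TensorProduct.map g g) (ΔC x)) ∧
      (∀ x : C, εT (g x) = εC x) ∧
      (∀ x : C, proj (g x) = Φ x) := by
  have hfin := hasFiniteSupport_liftComponent (ε := εC) huΔ hΦ1 hconn
  have hlift : IsCofreeLift ΔT εT proj ΔC εC uC Φ (cofreeLift ΔC εC Φ hfin) :=
    ⟨cofreeLift_unit huΔ hΦ1 huε, comul_cofreeLift huΔ hΦ1 hconn hΔT hcoassoc hcounitl,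
      counit_cofreeLift huΔ hΦ1 hconn hεT1 hεT,
      proj_cofreeLift huΔ hΦ1 hconn hcounitr hproj1 hprojι hproj⟩
  exact ⟨_, hlift, fun g hg => IsCofreeLift.unique hΔT hεT1 hεT hproj1 hprojι hproj hconn hg hlift⟩
end

section
/- In the completed free magmatic algebra on one generator t, the formal series g(t) = t − t·t + (t·t)·t − ⋯ + (−1)^{n+1}(⋯((t·t)·t)⋯·t) + ⋯ (left-combed trees with alternating signs) and f(t) = t + t·t + t·(t·t) + ⋯ + t·(t·(⋯(t·t))) + ⋯ (right-combed trees) are mutually inverse for composition: f ∘ g = id and g ∘ f = id. -/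
/-!
The right combs satisfy `f = t + t·f` and the left combs `g = t − g·t`. Substituting a fixed
series is additive and multiplicative in the outer series, so `f ∘ g = g + g·(f ∘ g)` and
`g ∘ f = f − (g ∘ f)·f`. A solution `h` of `h = α + β·h` (or of `h = α − h·β`) is determined
tree by tree, since its coefficient on `s₁·s₂` involves `h` only on `s₂` (resp. `s₁`); and
`t` solves both equations.
-/

namespace MagSeries

/-- Number of leaves of a planar binary tree (element of the free magma on one
generator). -/
def size : FreeMagma Unit → ℕ
  | FreeMagma.of _ => 1
  | FreeMagma.mul a b => size a + size b

/-- Is the tree a left comb `((((t·t)·t)⋯)·t)`? -/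
def isLeftComb : FreeMagma Unit → Bool
  | FreeMagma.of _ => true
  | FreeMagma.mul a (FreeMagma.of _) => isLeftComb a
  | _ => false

/-- Is the tree a right comb `(t·(t·(⋯(t·t))))`? -/
def isRightComb : FreeMagma Unit → Bool
  | FreeMagma.of _ => true
  | FreeMagma.mul (FreeMagma.of _) b => isRightComb b
  | _ => false

variable (K : Type*) [Field K]

/-- The series `g(t) = t − t·t + (t·t)·t − ⋯`, i.e. the element of the
completed free magmatic algebra whose coefficient on the left comb with `n`
leaves is `(−1)^{n+1}` and whose other coefficients vanish. -/
def gser : FreeMagma Unit → K :=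
  fun t => if isLeftComb t then (-1 : K) ^ (size t + 1) else 0

/-- The series `f(t) = t + t·t + t·(t·t) + ⋯`, supported on right combs with
all coefficients `1`. -/
def fser : FreeMagma Unit → K :=
  fun t => if isRightComb t then (1 : K) else 0

/-- The identity series `t`. -/
def idser : FreeMagma Unit → K :=
  fun t => match t with
    | FreeMagma.of _ => 1
    | _ => 0

/-- Convolution (magmatic product) of two series: every tree factors uniquely
as a product of two trees (or is the generator). -/
def conv (φ ψ : FreeMagma Unit → K) : FreeMagma Unit → K
  | FreeMagma.of _ => 0
  | FreeMagma.mul a b => φ a * ψ b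

/-- Substitution of a series `ψ` into a tree `t` (replace each leaf of `t` by
`ψ` and multiply out). -/
def subst (ψ : FreeMagma Unit → K) : FreeMagma Unit → (FreeMagma Unit → K)
  | FreeMagma.of _ => ψ
  | FreeMagma.mul a b => conv K (subst ψ a) (subst ψ b)

/-- Composition of formal series in the completed free magmatic algebra:
substitute `ψ` into each tree of `φ`. -/
noncomputable def comp (φ ψ : FreeMagma Unit → K) : FreeMagma Unit → K :=
  fun s => ∑ᶠ t : FreeMagma Unit, φ t * subst K ψ t s

lemma one_le_size (t : FreeMagma Unit) : 1 ≤ size t := by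
  induction t with
  | ih1 => rfl
  | ih2 a b _ _ => simp only [size]; omega

lemma finite_setOf_size_le (n : ℕ) : {t : FreeMagma Unit | size t ≤ n}.Finite := by
  induction n with
  | zero =>
    exact Set.finite_empty.subset fun t ht => absurd ((one_le_size t).trans ht) (by decide)
  | succ n ih =>
    refine ((ih.image2 (· * ·) ih).insert (FreeMagma.of ())).subset ?_
    rintro (_ | ⟨a, b⟩) h
    · exact Set.mem_insert _ _
    · have := one_le_size a
      have := one_le_size b
      simp only [Set.mem_ofPred_eq, size] at h
      exact Or.inr ⟨a, show size a ≤ n by omega, b, show size b ≤ n by omega, rfl⟩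

lemma subst_eq_zero_of_size_lt (ψ : FreeMagma Unit → K) {t s : FreeMagma Unit}
    (h : size s < size t) : subst K ψ t s = 0 := by
  induction t generalizing s with
  | ih1 => exact absurd h (one_le_size s).not_gt
  | ih2 a b iha ihb =>
    cases s with
    | of => rfl
    | mul s₁ s₂ =>
      change subst K ψ a s₁ * subst K ψ b s₂ = 0
      simp only [size] at h
      rcases lt_or_ge (size s₁) (size a) with ha | ha
      · rw [iha ha, zero_mul]
      · rw [ihb (by omega), mul_zero]

lemma finite_support_mul_subst (φ ψ : FreeMagma Unit → K) (s : FreeMagma Unit) :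
    (Function.support fun t => φ t * subst K ψ t s).Finite :=
  (finite_setOf_size_le (size s)).subset fun _ ht =>
    not_lt.mp fun h => Function.support_mul_subset_right _ _ ht (subst_eq_zero_of_size_lt K ψ h)

lemma finsum_eq_finsum_prod_mul_of_eq_zero {M : Type*} [AddCommMonoid M]
    (H : FreeMagma Unit → M) (h : H (FreeMagma.of ()) = 0) :
    ∑ᶠ t, H t = ∑ᶠ p : FreeMagma Unit × FreeMagma Unit, H (p.1 * p.2) := by
  have hinj : Function.Injective fun p : FreeMagma Unit × FreeMagma Unit => p.1 * p.2 :=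
    fun _ _ hpq => by injection hpq with h₁ h₂; exact Prod.ext h₁ h₂
  rw [← finsum_mem_range hinj, ← finsum_mem_univ]
  refine finsum_mem_inter_support_eq' H _ _ fun t ht => ?_
  cases t with
  | of => exact absurd h ht
  | mul a b => exact iff_of_true trivial ⟨(a, b), rfl⟩

lemma comp_add (φ φ' ψ : FreeMagma Unit → K) :
    comp K (φ + φ') ψ = comp K φ ψ + comp K φ' ψ :=
  funext fun s => by
    simp only [comp, Pi.add_apply, add_mul]
    exact finsum_add_distrib (finite_support_mul_subst K φ ψ s)
      (finite_support_mul_subst K φ' ψ s)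

lemma comp_sub (φ φ' ψ : FreeMagma Unit → K) :
    comp K (φ - φ') ψ = comp K φ ψ - comp K φ' ψ :=
  funext fun s => by
    simp only [comp, Pi.sub_apply, sub_mul]
    exact finsum_sub_distrib (finite_support_mul_subst K φ ψ s)
      (finite_support_mul_subst K φ' ψ s)

lemma comp_idser (ψ : FreeMagma Unit → K) : comp K (idser K) ψ = ψ :=
  funext fun s => (finsum_eq_single _ (FreeMagma.of ()) fun t ht => by
    cases t with
    | of => exact absurd rfl ht
    | mul => exact zero_mul _).trans (one_mul _)

lemma comp_conv (φ φ' ψ : FreeMagma Unit → K) :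
    comp K (conv K φ φ') ψ = conv K (comp K φ ψ) (comp K φ' ψ) := by
  funext s
  cases s with
  | of =>
    refine finsum_eq_zero_of_forall_eq_zero fun t => ?_
    cases t with
    | of => exact zero_mul _
    | mul => exact mul_zero _
  | mul s₁ s₂ =>
    set F := fun a => φ a * subst K ψ a s₁
    set G := fun b => φ' b * subst K ψ b s₂
    have hFG : (Function.support fun p : FreeMagma Unit × FreeMagma Unit => F p.1 * G p.2).Finite :=
      ((finite_support_mul_subst K φ ψ s₁).prod (finite_support_mul_subst K φ' ψ s₂)).subset
        fun _ hp => ⟨left_ne_zero_of_mul hp, right_ne_zero_of_mul hp⟩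
    calc comp K (conv K φ φ') ψ (FreeMagma.mul s₁ s₂)
        = ∑ᶠ p : FreeMagma Unit × FreeMagma Unit, F p.1 * G p.2 := by
          rw [comp, finsum_eq_finsum_prod_mul_of_eq_zero _ (zero_mul _)]
          exact finsum_congr fun _ => mul_mul_mul_comm _ _ _ _
      _ = ∑ᶠ (a) (b), F a * G b := finsum_curry _ hFG
      _ = (∑ᶠ a, F a) * ∑ᶠ b, G b := by simp_rw [finsum_mul, mul_finsum]

lemma eq_of_eq_add_conv_left {α β h h' : FreeMagma Unit → K}
    (hh : h = α + conv K β h) (hh' : h' = α + conv K β h') : h = h' := by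
  funext s
  induction s with
  | ih1 => rw [hh, hh']; rfl
  | ih2 a b _ ihb =>
    calc h (a * b) = α (a * b) + β a * h b := congrFun hh _
      _ = α (a * b) + β a * h' b := by rw [ihb]
      _ = h' (a * b) := (congrFun hh' _).symm

lemma eq_of_eq_sub_conv_right {α β h h' : FreeMagma Unit → K}
    (hh : h = α - conv K h β) (hh' : h' = α - conv K h' β) : h = h' := by
  funext s
  induction s with
  | ih1 => rw [hh, hh']; rfl
  | ih2 a b iha _ =>
    calc h (a * b) = α (a * b) - h a * β b := congrFun hh _
      _ = α (a * b) - h' a * β b := by rw [iha]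
      _ = h' (a * b) := (congrFun hh' _).symm

lemma fser_eq_idser_add_conv : fser K = idser K + conv K (idser K) (fser K) := by
  funext s
  rcases s with ⟨⟩ | ⟨⟨⟩ | _, b⟩
  · simp [fser, idser, conv, isRightComb]
  · change fser K b = 0 + 1 * fser K b
    rw [zero_add, one_mul]
  · simp [fser, idser, conv, isRightComb]

lemma gser_eq_idser_sub_conv : gser K = idser K - conv K (gser K) (idser K) := by
  funext s
  rcases s with ⟨⟩ | ⟨a, ⟨⟩ | _⟩
  · change (-1 : K) ^ 2 = 1 - 0
    norm_num
  · change (if isLeftComb a then (-1 : K) ^ (size a + 1 + 1) else 0)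
      = 0 - (if isLeftComb a then (-1 : K) ^ (size a + 1) else 0) * 1
    split_ifs <;> ring
  · simp [gser, idser, conv, isLeftComb]

/-- In `Mag(K)^∧`, the alternating left-comb series `g` and the right-comb
series `f` are mutually inverse for composition: `f ∘ g = id` and
`g ∘ f = id`. -/
theorem fser_gser_comp_inverse :
    comp K (fser K) (gser K) = idser K ∧ comp K (gser K) (fser K) = idser K := by
  constructor
  · have hfg : comp K (fser K) (gser K) =
        gser K + conv K (gser K) (comp K (fser K) (gser K)) := by
      conv_lhs => rw [fser_eq_idser_add_conv]
      rw [comp_add, comp_conv, comp_idser]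
    have hid : idser K = gser K + conv K (gser K) (idser K) :=
      (eq_sub_iff_add_eq.mp (gser_eq_idser_sub_conv K)).symm
    exact eq_of_eq_add_conv_left K hfg hid
  · have hgf : comp K (gser K) (fser K) =
        fser K - conv K (comp K (gser K) (fser K)) (fser K) := by
      conv_lhs => rw [gser_eq_idser_sub_conv]
      rw [comp_sub, comp_conv, comp_idser]
    have hid : idser K = fser K - conv K (idser K) (fser K) :=
      eq_sub_of_add_eq (fser_eq_idser_add_conv K).symm
    exact eq_of_eq_sub_conv_right K hgf hid

end MagSeries
end
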